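/- The splitting order is well-founded on collections of pairwise disjoint sets: define, for finite sets A and B whose elements are pairwise disjoint nonempty finite sets, A ≤ B iff every element of A is a subset of some element of B, and A < B iff A ≤ B and A ≠ B. Then there is no infinite strictly descending chain A₁ > A₂ > A₃ > ⋯ of such collections. -/
import Mathlib


/-- `A ≤ B` for collections of blocks: every element of `A` is contained in
some element of `B`. -/
def SplitLE {α : Type*} (A B : Finset (Finset α)) : Prop :=
  ∀ a ∈ A, ∃ b ∈ B, a ⊆ b

/-- A collection of blocks: a finite set of pairwise disjoint nonempty
finite sets. -/
def IsBlockCollection {α : Type*} (A : Finset (Finset α)) : Prop :=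
  (∀ a ∈ A, a.Nonempty) ∧
    (A : Set (Finset α)).Pairwise (fun a b => Disjoint a b)

lemma splitLE_subset_of_le {α : Type*} {A B : Finset (Finset α)}
    (hA : IsBlockCollection A) (h1 : SplitLE A B) (h2 : SplitLE B A) : A ⊆ B := by
  intro a ha
  obtain ⟨b, hb, hab⟩ := h1 a ha
  obtain ⟨a', ha', hba'⟩ := h2 b hb
  have haa' : a = a' := by
    by_contra hne
    have hd := hA.2 ha ha' hne
    obtain ⟨x, hx⟩ := hA.1 a ha
    exact (Finset.disjoint_left.mp hd hx) (hba' (hab hx))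
  have : a = b := Finset.Subset.antisymm hab (haa' ▸ hba')
  exact this ▸ hb

lemma splitLE_antisymm {α : Type*} {A B : Finset (Finset α)}
    (hA : IsBlockCollection A) (hB : IsBlockCollection B)
    (h1 : SplitLE A B) (h2 : SplitLE B A) : A = B :=
  Finset.Subset.antisymm (splitLE_subset_of_le hA h1 h2) (splitLE_subset_of_le hB h2 h1)

/-- The splitting order is well-founded: there is no infinite
strictly descending chain `A₁ > A₂ > A₃ > ⋯` of finite collections of
pairwise disjoint nonempty finite sets, where `A < B` iff `SplitLE A B` and
`A ≠ B`. -/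
theorem splitLE_no_infinite_descending_chain {α : Type*} :
    ¬ ∃ f : ℕ → Finset (Finset α),
        (∀ i, IsBlockCollection (f i)) ∧
          (∀ i, SplitLE (f (i + 1)) (f i) ∧ f (i + 1) ≠ f i) := by
  rintro ⟨f, hblock, hchain⟩
  classical
  -- transitive chain
  have hle : ∀ i j, i ≤ j → SplitLE (f j) (f i) := by
    intro i j hij
    induction j, hij using Nat.le_induction with
    | base => exact fun a ha => ⟨a, ha, subset_rfl⟩
    | succ n hn ih =>
      intro a ha
      obtain ⟨b, hb, hab⟩ := (hchain n).1 a ha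
      obtain ⟨c, hc, hbc⟩ := ih b hb
      exact ⟨c, hc, hab.trans hbc⟩
  -- all collections live in a fixed finite set
  set S : Finset α := (f 0).sup id with hS
  have hmem : ∀ i, f i ∈ S.powerset.powerset := by
    intro i
    rw [Finset.mem_powerset]
    intro a ha
    rw [Finset.mem_powerset]
    obtain ⟨b, hb, hab⟩ := hle 0 i (Nat.zero_le i) a ha
    exact hab.trans (Finset.le_sup (f := id) hb)
  -- pigeonhole: a repeat
  have : ¬ Function.Injective fun i : ℕ => (⟨f i, hmem i⟩ : {x // x ∈ S.powerset.powerset}) := by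
    intro hinj
    exact (Finite.of_injective _ hinj).false
  rw [Function.not_injective_iff] at this
  obtain ⟨i, j, hfeq', hne⟩ := this
  have hfeq : f i = f j := congrArg Subtype.val hfeq'
  clear hfeq'
  wlog hij : i < j generalizing i j
  · exact this j i hne.symm hfeq.symm (hne.lt_or_gt.resolve_left hij)
  have h1 : SplitLE (f (i + 1)) (f j) := hfeq ▸ (hchain i).1
  have h2 : SplitLE (f j) (f (i + 1)) := hle (i + 1) j hij
  have := splitLE_antisymm (hblock (i + 1)) (hblock j) h1 h2
  exact (hchain i).2 (this.trans hfeq.symm)
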